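/- Consider an instance of P_m||C_max with m ≥ 3 machines and exactly n = 2m + 1 jobs with processing times p_1 ≥ p_2 ≥ … ≥ p_n ≥ 0. Suppose the LPT schedule assigns, for each i = 1,…,m, jobs i and 2m+1−i to machine M_i and then assigns the critical job 2m+1 to a machine of minimal load, and suppose p_{2m+1} < p_1 − p_m. Then C^LPT ≤ (15/13) · C* if m = 3, and C^LPT ≤ (4/3 − 1/(2m−1)) · C* if m ≥ 4. -/

import Mathlib

open Finset

/-- Load of machine `i` under schedule `σ` with processing times `p`. -/
def mload {m n : ℕ} (p : Fin n → ℝ) (σ : Fin n → Fin m) (i : Fin m) : ℝ :=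
  ∑ j ∈ Finset.univ.filter (fun j => σ j = i), p j

/-- Makespan of a schedule: the maximum machine load. -/
noncomputable def makespan {m n : ℕ} (p : Fin n → ℝ) (σ : Fin n → Fin m) : ℝ :=
  ⨆ i : Fin m, mload p σ i

/-- Optimal makespan `C*`: minimum makespan over all schedules on `m` machines. -/
noncomputable def optMakespan (m : ℕ) {n : ℕ} (p : Fin n → ℝ) : ℝ :=
  ⨅ σ : Fin n → Fin m, makespan p σ

/-- Processing times are sorted non-increasingly and are nonnegative. -/
def SortedNonneg {n : ℕ} (p : Fin n → ℝ) : Prop :=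
  (∀ i j : Fin n, i ≤ j → p j ≤ p i) ∧ ∀ j, 0 ≤ p j

/-- Load of machine `i` just before job `j` is assigned, when all jobs of `T`
are placed first and the remaining jobs are assigned in index order:
it counts all jobs of `T` on machine `i` plus all jobs of index `< j` on machine `i`. -/
def prefLoad {m n : ℕ} (p : Fin n → ℝ) (σ : Fin n → Fin m) (T : Finset (Fin n))
    (j : Fin n) (i : Fin m) : ℝ :=
  ∑ j' ∈ Finset.univ.filter (fun j' => (j' ∈ T ∨ j' < j) ∧ σ j' = i), p j'

/-- `σ` is a list schedule obtained by first placing all jobs of `T` together on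
one machine and then assigning the remaining jobs in index order (i.e. in
non-increasing order of processing time, for sorted `p`), each to a machine of
minimal current load. -/
def IsLSAfter {m n : ℕ} (p : Fin n → ℝ) (T : Finset (Fin n)) (σ : Fin n → Fin m) : Prop :=
  (∀ j ∈ T, ∀ j' ∈ T, σ j = σ j') ∧
  ∀ j, j ∉ T → ∀ i, prefLoad p σ T j (σ j) ≤ prefLoad p σ T j i

/-- `σ` is an LPT schedule: jobs assigned in order `1,…,n`, each to a machine of
minimal current load. -/
def IsLPT {m n : ℕ} (p : Fin n → ℝ) (σ : Fin n → Fin m) : Prop :=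
  IsLSAfter p ∅ σ

/-- `j'` is the critical job of schedule `σ`: it is assigned to a critical machine
(one whose load equals the makespan), and it is the largest-indexed job assigned
to a critical machine. -/
def IsCriticalJob {m n : ℕ} (p : Fin n → ℝ) (σ : Fin n → Fin m) (j' : Fin n) : Prop :=
  mload p σ (σ j') = makespan p σ ∧
  ∀ j : Fin n, mload p σ (σ j) = makespan p σ → j ≤ j'

/-- The (1-based) position of job `j'` on its machine: the number of jobs of index
`≤ j'` assigned to the same machine as `j'`. -/
def posOn {m n : ℕ} (σ : Fin n → Fin m) (j' : Fin n) : ℕ :=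
  (Finset.univ.filter (fun t => σ t = σ j' ∧ t ≤ j')).card

/-- The tuple of the `k` consecutive jobs `j'-k+1, …, j'` (in 1-based terms). -/
def tupleSet {n : ℕ} (j' : Fin n) (k : ℕ) : Finset (Fin n) :=
  Finset.univ.filter (fun t => t ≤ j' ∧ j'.val < t.val + k)

/-- An LPT′ schedule for critical job `j'`: job `j'` is placed alone on a machine
first, then the remaining jobs are assigned in index order, each to a machine of
minimal current load. -/
def IsLPTprime {m n : ℕ} (p : Fin n → ℝ) (j' : Fin n) (σ' : Fin n → Fin m) : Prop :=
  IsLSAfter p {j'} σ'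

/-- An LPT″ schedule for critical job `j'` in position `k`: jobs `j'-k+1,…,j'` are
placed together on one machine first, then the remaining jobs are assigned in
non-increasing order of processing time, each to a machine of minimal current load. -/
def IsLPTsec {m n : ℕ} (p : Fin n → ℝ) (j' : Fin n) (k : ℕ) (σ'' : Fin n → Fin m) : Prop :=
  IsLSAfter p (tupleSet j' k) σ''

/-! Jobs are indexed from 0, so the critical job is `2m` and machine `σ t` holds the pair
`t, 2m-1-t` before it arrives. Let `c` be the least pair load, i.e. the load of the critical
machine just before job `2m`, so that `C^LPT = c + q` with `q = p_{2m}`. Since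
`c ≤ p_{m-1} + p_m ≤ 2 p_{m-1}` and `q < p_0 - p_{m-1}`, the first pair has load
`p_0 + p_{2m-1} > c/2 + 2q`; comparing the sum of all pair loads with `∑ p ≤ m C*` gives
`(2m-1) c + 6q ≤ 2m C*`, and also `m c + q ≤ m C*`. Some machine receives three jobs, so
`3q ≤ C*`. For `m = 3` the first two bounds give `13 (c + q) ≤ 15 C*`; for `m ≥ 4` the first
and the last give the ratio `(8m-7)/(6m-3) = 4/3 - 1/(2m-1)`. -/

section Schedule

variable {m n : ℕ} (p : Fin n → ℝ) (σ : Fin n → Fin m)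

lemma sum_mload : ∑ i, mload p σ i = ∑ j, p j := by
  simpa [mload] using Finset.sum_fiberwise (univ : Finset (Fin n)) σ p

lemma mload_le_makespan (i : Fin m) : mload p σ i ≤ makespan p σ :=
  le_ciSup (Set.finite_range _).bddAbove i

lemma sum_le_mul_makespan : ∑ j, p j ≤ m * makespan p σ := by
  rw [← sum_mload p σ]
  simpa using Finset.sum_le_sum fun i (_ : i ∈ univ) => mload_le_makespan p σ i

lemma le_optMakespan (hm : 0 < m) {a : ℝ} (h : ∀ σ : Fin n → Fin m, a ≤ makespan p σ) :
    a ≤ optMakespan m p :=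
  have : Nonempty (Fin n → Fin m) := ⟨fun _ => ⟨0, hm⟩⟩
  le_ciInf h

lemma sum_le_mul_optMakespan (hm : 0 < m) : ∑ j, p j ≤ m * optMakespan m p := by
  have hm' : (0 : ℝ) < m := by exact_mod_cast hm
  rw [← div_le_iff₀' hm']
  exact le_optMakespan p hm fun σ => (div_le_iff₀' hm').2 (sum_le_mul_makespan p σ)

end Schedule

lemma sum_last_three_le_makespan {m n : ℕ} (hmn : 2 * m ≤ n) (hn : 2 ≤ n)
    (p : Fin (n + 1) → ℝ) (hp : SortedNonneg p) (σ : Fin (n + 1) → Fin m) :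
    p ⟨n - 2, by omega⟩ + p ⟨n - 1, by omega⟩ + p (Fin.last n) ≤ makespan p σ := by
  obtain ⟨i, -, hi⟩ := Finset.exists_lt_card_fiber_of_mul_lt_card_of_maps_to
    (s := univ) (t := univ) (f := σ) (n := 2) (fun _ _ => mem_univ _)
    (by simp only [card_univ, Fintype.card_fin]; omega)
  obtain ⟨s, hs, hs3⟩ := Finset.exists_subset_card_eq (Nat.succ_le_of_lt hi)
  set e := s.orderEmbOfFin hs3
  have h01 : (e 0 : ℕ) < e 1 := e.strictMono (by decide)
  have h12 : (e 1 : ℕ) < e 2 := e.strictMono (by decide)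
  have h2 : (e 2 : ℕ) ≤ n := Nat.lt_succ_iff.1 (e 2).isLt
  have hs_sum : ∑ j ∈ s, p j = p (e 0) + p (e 1) + p (e 2) := by
    rw [← s.map_orderEmbOfFin_univ hs3, Finset.sum_map, Fin.sum_univ_three]
    rfl
  calc p ⟨n - 2, _⟩ + p ⟨n - 1, _⟩ + p (Fin.last n)
      ≤ p (e 0) + p (e 1) + p (e 2) := by
        gcongr ?_ + ?_ + ?_ <;> apply hp.1 <;> simp only [Fin.le_def, Fin.val_last] <;> omega
    _ = ∑ j ∈ s, p j := hs_sum.symm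
    _ ≤ mload p σ i := Finset.sum_le_sum_of_subset_of_nonneg hs fun j _ _ => hp.2 j
    _ ≤ makespan p σ := mload_le_makespan p σ i

section LastJob

variable {m n : ℕ} (p : Fin (n + 1) → ℝ) (σ : Fin (n + 1) → Fin m)

lemma mload_eq_prefLoad_last_add (i : Fin m) :
    mload p σ i =
      prefLoad p σ ∅ (Fin.last n) i + if σ (Fin.last n) = i then p (Fin.last n) else 0 := by
  simp [mload, prefLoad, Finset.sum_filter, Fin.sum_univ_castSucc, Fin.castSucc_lt_last]

lemma sum_prefLoad_last_add : ∑ i, prefLoad p σ ∅ (Fin.last n) i + p (Fin.last n) = ∑ j, p j := by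
  simp [← sum_mload p σ, mload_eq_prefLoad_last_add, Finset.sum_add_distrib]

end LastJob

lemma card_sub_one_mul_add_le_sum {ι : Type*} [Fintype ι] (f : ι → ℝ) {c : ℝ}
    (hc : ∀ i, c ≤ f i) (i₀ : ι) : ((Fintype.card ι : ℝ) - 1) * c + f i₀ ≤ ∑ i, f i := by
  classical
  have h := Finset.card_nsmul_le_sum (univ.erase i₀) f c fun i _ => hc i
  rw [Finset.card_erase_of_mem (mem_univ _), nsmul_eq_mul, Finset.card_univ,
    Nat.cast_pred (Fintype.card_pos_iff.2 ⟨i₀⟩)] at h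
  linarith [Finset.add_sum_erase univ f (mem_univ i₀)]

lemma prefLoad_last_of_pairing {m : ℕ} (p : Fin (2 * m + 1) → ℝ) (σ : Fin (2 * m + 1) → Fin m)
    (hpair : ∀ t : Fin m, σ ⟨t.val, t.val_lt_of_le (by omega)⟩ =
      σ ⟨2 * m - 1 - t.val, Nat.lt_succ_of_le (by omega)⟩)
    (hinj : Function.Injective (fun t : Fin m => σ ⟨t.val, t.val_lt_of_le (by omega)⟩))
    (t k : ℕ) (ht : t < m) (htk : t + k = 2 * m - 1) :
    prefLoad p σ ∅ (Fin.last (2 * m)) (σ ⟨t, by omega⟩) = p ⟨t, by omega⟩ + p ⟨k, by omega⟩ := by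
  have hpair_k : σ ⟨t, by omega⟩ = σ ⟨k, by omega⟩ :=
    (hpair ⟨t, ht⟩).trans (congrArg σ (Fin.ext (by simp only; omega)))
  have hjobs : univ.filter (fun j => (j ∈ (∅ : Finset _) ∨ j < Fin.last (2 * m)) ∧
      σ j = σ ⟨t, by omega⟩) = {⟨t, by omega⟩, ⟨k, by omega⟩} := by
    ext j
    simp only [mem_filter, mem_univ, true_and, Finset.notMem_empty, false_or, mem_insert,
      mem_singleton, Fin.lt_def, Fin.val_last]
    constructor
    · rintro ⟨hj, hσj⟩
      by_cases hjm : j.val < m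
      · exact Or.inl (Fin.ext (congrArg Fin.val (@hinj ⟨j.val, hjm⟩ ⟨t, ht⟩ hσj) :))
      · have h := (hpair ⟨2 * m - 1 - j.val, by omega⟩).trans
          ((congrArg σ (Fin.ext (by simp only; omega))).trans hσj)
        have := congrArg Fin.val (@hinj ⟨2 * m - 1 - j.val, by omega⟩ ⟨t, ht⟩ h)
        simp only at this
        exact Or.inr (Fin.ext (by simp only; omega))
    · rintro (rfl | rfl)
      · exact ⟨by simp only; omega, rfl⟩
      · exact ⟨by simp only; omega, hpair_k.symm⟩
  rw [prefLoad, hjobs, Finset.sum_pair (by simp only [ne_eq, Fin.ext_iff]; omega)]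

lemma add_le_four_div_three_sub_mul {m c q M : ℝ} (hm : 4 ≤ m)
    (hcq : (2 * m - 1) * c + 6 * q ≤ 2 * m * M) (hq : 3 * q ≤ M) :
    c + q ≤ (4 / 3 - 1 / (2 * m - 1)) * M := by
  have hratio : 4 / 3 - 1 / (2 * m - 1) = (8 * m - 7) / (3 * (2 * m - 1)) := by
    have : 2 * m - 1 ≠ 0 := by linarith
    field_simp
    ring
  rw [hratio, div_mul_eq_mul_div, le_div_iff₀ (by linarith)]
  nlinarith [mul_le_mul_of_nonneg_left hq (by linarith : 0 ≤ 2 * m - 7)]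

/-- Proposition 13: for `n = 2m+1`, if the LPT schedule pairs job `i`
with job `2m+1−i` on machine `M_i` (distinct machines) and then assigns the critical
job `2m+1` to a machine of minimal load, and `p_{2m+1} < p_1 − p_m`, then
`C^LPT ≤ (15/13)·C*` for `m = 3` and `C^LPT ≤ (4/3 − 1/(2m−1))·C*` for `m ≥ 4`. -/
theorem stmt10 {m : ℕ} (hm : 3 ≤ m)
    (p : Fin (2 * m + 1) → ℝ) (hp : SortedNonneg p)
    (σ : Fin (2 * m + 1) → Fin m) (hσ : IsLPT p σ)
    (hpair : ∀ t : Fin m, σ ⟨t.val, by have := t.isLt; omega⟩ =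
      σ ⟨2 * m - 1 - t.val, by omega⟩)
    (hinj : Function.Injective (fun t : Fin m =>
      σ ⟨t.val, by have := t.isLt; omega⟩))
    (hcrit : IsCriticalJob p σ ⟨2 * m, by omega⟩)
    (h1 : p ⟨2 * m, by omega⟩ < p ⟨0, by omega⟩ - p ⟨m - 1, by omega⟩) :
    (m = 3 → makespan p σ ≤ (15 / 13) * optMakespan m p) ∧
    (4 ≤ m → makespan p σ ≤ (4 / 3 - 1 / (2 * (m : ℝ) - 1)) * optMakespan m p) := by
  set q := p (Fin.last (2 * m))
  set c := prefLoad p σ ∅ (Fin.last (2 * m)) (σ (Fin.last (2 * m)))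
  have hc : ∀ i, c ≤ prefLoad p σ ∅ (Fin.last (2 * m)) i := hσ.2 _ (notMem_empty _)
  have hmakespan : makespan p σ = c + q := by
    have hcrit_last : mload p σ (σ (Fin.last (2 * m))) = makespan p σ := hcrit.1
    rw [← hcrit_last, mload_eq_prefLoad_last_add, if_pos rfl]
  have hfirst := prefLoad_last_of_pairing p σ hpair hinj 0 (2 * m - 1) (by omega) (by omega)
  have hmid := prefLoad_last_of_pairing p σ hpair hinj (m - 1) m (by omega) (by omega)
  have havg := card_sub_one_mul_add_le_sum _ hc (σ ⟨0, by omega⟩)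
  rw [Fintype.card_fin, hfirst] at havg
  have htotal := sum_prefLoad_last_add p σ
  have hS := sum_le_mul_optMakespan p (by omega : 0 < m)
  have hlast3 : p ⟨2 * m - 2, by omega⟩ + p ⟨2 * m - 1, by omega⟩ + q ≤ optMakespan m p :=
    le_optMakespan p (by omega) (sum_last_three_le_makespan (by omega) (by omega) p hp)
  have hmid_le : p ⟨m, by omega⟩ ≤ p ⟨m - 1, by omega⟩ := hp.1 _ _ (Fin.mk_le_mk.2 (by omega))
  have hq_le : q ≤ p ⟨2 * m - 1, by omega⟩ := hp.1 _ _ (Fin.mk_le_mk.2 (by omega))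
  have hq_le' : p ⟨2 * m - 1, by omega⟩ ≤ p ⟨2 * m - 2, by omega⟩ :=
    hp.1 _ _ (Fin.mk_le_mk.2 (by omega))
  change q < _ at h1
  have hcq : (2 * m - 1) * c + 6 * q ≤ 2 * m * optMakespan m p := by
    linarith [hc (σ ⟨m - 1, by omega⟩)]
  have hcm : m * c + q ≤ m * optMakespan m p := by
    linarith [hc (σ ⟨0, by omega⟩)]
  refine ⟨fun hm3 => ?_, fun hm4 => ?_⟩
  · have hm3' : (m : ℝ) = 3 := by exact_mod_cast hm3
    rw [hm3'] at hcq hcm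
    rw [hmakespan]
    linarith
  · rw [hmakespan]
    exact add_le_four_div_three_sub_mul (by exact_mod_cast hm4) hcq (by linarith)
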